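/- arXiv:math/0305252 — 4 statements merged into one kernel-verified Lean document; each statement's English description precedes it below -/
import Mathlib

section
/- For every n ≥ 1, Emin(n) = (Γ(n/2)/Γ((n+1)/2)) · ∫₀^∞ (1 − (1/√π) ∫_{−y}^{y} e^{−x²} dx)ⁿ dy, where Emin(n) = (1/vol(S^{n-1})) ∫_{S^{n-1}} min_{1≤i≤n} |x_i| dσ. -/
open MeasureTheory Real

/-- The mean over the unit sphere `S^{n-1} ⊂ ℝⁿ` of the smallest absolute value of a
coordinate, where the sphere carries its rotationally invariant surface measure. -/
noncomputable def Emin (n : ℕ) : ℝ :=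
  (((volume : Measure (EuclideanSpace ℝ (Fin n))).toSphere Set.univ).toReal)⁻¹ *
    ∫ y : Metric.sphere (0 : EuclideanSpace ℝ (Fin n)) 1,
      (⨅ i : Fin n, |(y : EuclideanSpace ℝ (Fin n)) i|)
      ∂(volume : Measure (EuclideanSpace ℝ (Fin n))).toSphere

/-! Integrate `x ↦ min |xᵢ| · e^{-‖x‖²}` over `ℝⁿ` in two ways. In polar coordinates the
homogeneity of the minimum splits the integral into `∫_{S^{n-1}} min |xᵢ| dσ` times the radial
moment `∫₀^∞ rⁿ e^{-r²} dr = Γ((n+1)/2)/2`. By the layer-cake formula it is also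
`∫₀^∞ γ{min |xᵢ| > t} dt` for the Gaussian weight `γ`, and since both the weight and the event
`{∀ i, |xᵢ| > t}` factor over the coordinates, `γ{min |xᵢ| > t} = (√π - ∫_{-t}^{t} e^{-u²} du)ⁿ`.
Dividing by `σ(S^{n-1}) = 2 √πⁿ / Γ(n/2)` gives the formula. -/

open Set Metric

local notation "dim" => Module.finrank ℝ

theorem integral_mul_eq_integral_setIntegral_lt {α : Type*} [MeasurableSpace α] {μ : Measure α}
    {f w : α → ℝ} (hf : Measurable f) (hf0 : 0 ≤ f) (hw : Measurable w) (hw0 : 0 ≤ w)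
    (hfw : Integrable (fun x ↦ f x * w x) μ) :
    ∫ x, f x * w x ∂μ = ∫ t in Ioi 0, ∫ x in {x | t < f x}, w x ∂μ := by
  set ν := μ.withDensity fun x ↦ ENNReal.ofReal (w x)
  have hdens : ∀ᵐ x ∂μ, ENNReal.ofReal (w x) < ⊤ := ae_of_all _ fun _ ↦ ENNReal.ofReal_lt_top
  have hfν : Integrable f ν := by
    rw [integrable_withDensity_iff_integrable_smul' hw.ennreal_ofReal hdens]
    simpa [ENNReal.toReal_ofReal (hw0 _), mul_comm] using hfw
  calc ∫ x, f x * w x ∂μ = ∫ x, f x ∂ν := by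
        rw [integral_withDensity_eq_integral_toReal_smul hw.ennreal_ofReal hdens]
        simp [ENNReal.toReal_ofReal (hw0 _), mul_comm]
    _ = ∫ t in Ioi 0, ν.real {x | t < f x} := hfν.integral_eq_integral_meas_lt (ae_of_all _ hf0)
    _ = _ := by
        congr 1; funext t
        rw [measureReal_def, withDensity_apply _ (measurableSet_lt measurable_const hf),
          integral_eq_lintegral_of_nonneg_ae (ae_of_all _ fun x ↦ hw0 x) hw.aestronglyMeasurable]

section PolarCoordinates
variable {E : Type*} [NormedAddCommGroup E] [NormedSpace ℝ E] [MeasurableSpace E] [BorelSpace E]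
  [FiniteDimensional ℝ E] [Nontrivial E] (μ : Measure E) [μ.IsAddHaarMeasure]

theorem integral_homogeneous_mul_radial (k : ℕ) {f : E → ℝ}
    (hf : ∀ r : ℝ, 0 < r → ∀ y ∈ sphere (0 : E) 1, f (r • y) = r ^ k * f y) (g : ℝ → ℝ) :
    ∫ x, f x * g ‖x‖ ∂μ =
      (∫ y, f y ∂μ.toSphere) * ∫ r in Ioi 0, r ^ (dim E - 1 + k) * g r := by
  calc ∫ x, f x * g ‖x‖ ∂μ
      = ∫ x : ({0}ᶜ : Set E), f x * g ‖(x : E)‖ ∂μ.comap (↑) := by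
        rw [integral_subtype_comap (measurableSet_singleton _).compl fun x ↦ f x * g ‖x‖,
          restrict_compl_singleton]
    _ = ∫ p : sphere (0 : E) 1 × Ioi (0 : ℝ), f p.1 * (p.2.1 ^ k * g p.2)
          ∂μ.toSphere.prod (.volumeIoiPow (dim E - 1)) := by
        rw [← μ.measurePreserving_homeomorphUnitSphereProd.integral_comp
          (Homeomorph.measurableEmbedding _)]
        refine integral_congr_ae (.of_forall fun x ↦ ?_)
        have hx : 0 < ‖(x : E)‖ := norm_pos_iff.2 x.2
        have hfx := hf _ hx (‖(x : E)‖⁻¹ • (x : E)) (by simp [norm_smul, hx.ne'])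
        rw [smul_inv_smul₀ hx.ne'] at hfx
        simp only [homeomorphUnitSphereProd_apply_fst_coe, homeomorphUnitSphereProd_apply_snd_coe,
          hfx]
        ring
    _ = (∫ y, f y ∂μ.toSphere) * ∫ r : Ioi (0 : ℝ), r.1 ^ k * g r ∂.volumeIoiPow (dim E - 1) :=
        integral_prod_mul (fun y : sphere (0 : E) 1 ↦ f y) fun r : Ioi (0 : ℝ) ↦ r.1 ^ k * g r
    _ = _ := by
        congr 1
        simp only [Measure.volumeIoiPow, ENNReal.ofReal]
        rw [integral_withDensity_eq_integral_smul
            (measurable_subtype_coe.pow_const _).real_toNNReal,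
          integral_subtype_comap measurableSet_Ioi
            fun a ↦ (a ^ (dim E - 1)).toNNReal • (a ^ k * g a)]
        refine setIntegral_congr_fun measurableSet_Ioi fun r hr ↦ ?_
        rw [NNReal.smul_def, Real.coe_toNNReal _ (pow_nonneg hr.out.le _), smul_eq_mul, pow_add]
        ring

end PolarCoordinates

theorem setIntegral_Ioi_pow_mul_exp_neg_sq (k : ℕ) :
    ∫ r in Ioi (0 : ℝ), r ^ k * exp (-r ^ 2) = Gamma ((k + 1) / 2) / 2 := by
  have h := integral_rpow_mul_exp_neg_rpow two_pos (neg_one_lt_zero.trans_le k.cast_nonneg)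
  simp only [rpow_natCast, rpow_two] at h
  rw [h]; ring

theorem integrable_norm_pow_mul_exp_neg_norm_sq {E : Type*} [NormedAddCommGroup E]
    [NormedSpace ℝ E] [MeasurableSpace E] [BorelSpace E] [FiniteDimensional ℝ E]
    (μ : Measure E) [μ.IsAddHaarMeasure] (k : ℕ) :
    Integrable (fun x : E ↦ ‖x‖ ^ k * exp (-‖x‖ ^ 2)) μ := by
  nontriviality E
  rw [integrable_fun_norm_addHaar μ (f := fun r ↦ r ^ k * exp (-r ^ 2))]
  have h := integrableOn_rpow_mul_exp_neg_rpow (s := (dim E - 1 + k : ℕ))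
    (neg_one_lt_zero.trans_le (Nat.cast_nonneg _)) two_pos
  simp only [rpow_natCast, rpow_two] at h
  refine h.congr_fun (fun r _ ↦ ?_) measurableSet_Ioi
  simp only [smul_eq_mul, pow_add]; ring

theorem EuclideanSpace.toSphere_real_univ (ι : Type*) [Fintype ι] [Nonempty ι] :
    (volume : Measure (EuclideanSpace ℝ ι)).toSphere.real univ =
      2 * √π ^ Fintype.card ι / Gamma (Fintype.card ι / 2) := by
  have hι : (0 : ℝ) < Fintype.card ι := by exact_mod_cast Fintype.card_pos
  rw [Measure.toSphere_real_apply_univ, finrank_euclideanSpace, measureReal_def,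
    EuclideanSpace.volume_ball, Gamma_add_one (by positivity)]
  rw [ENNReal.ofReal_one, one_pow, one_mul, ENNReal.toReal_ofReal (by positivity)]
  field_simp

theorem setIntegral_lt_abs_exp_neg_sq {t : ℝ} (ht : 0 ≤ t) :
    ∫ u in {u : ℝ | t < |u|}, exp (-u ^ 2) = √π - ∫ u in -t..t, exp (-u ^ 2) := by
  have hcompl : {u : ℝ | t < |u|} = (Icc (-t) t)ᶜ := by
    ext u
    simp only [mem_ofPred_eq, mem_compl_iff, mem_Icc, ← abs_le, not_le]
  have hint : Integrable fun u : ℝ ↦ exp (-u ^ 2) := by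
    simpa using integrable_exp_neg_mul_sq one_pos
  rw [hcompl, setIntegral_compl measurableSet_Icc hint, integral_Icc_eq_integral_Ioc,
    ← intervalIntegral.integral_of_le (by linarith)]
  simpa using integral_gaussian 1

namespace EuclideanSpace

variable {ι : Type*}

noncomputable def minAbsCoord (x : EuclideanSpace ℝ ι) : ℝ := ⨅ i, |x i|

theorem minAbsCoord_nonneg (x : EuclideanSpace ℝ ι) : 0 ≤ minAbsCoord x :=
  Real.iInf_nonneg fun _ ↦ abs_nonneg _

theorem minAbsCoord_smul {r : ℝ} (hr : 0 ≤ r) (x : EuclideanSpace ℝ ι) :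
    minAbsCoord (r • x) = r * minAbsCoord x := by
  simp only [minAbsCoord, Real.mul_iInf_of_nonneg hr, PiLp.smul_apply, smul_eq_mul, abs_mul,
    abs_of_nonneg hr]

variable [Fintype ι]

theorem measurable_minAbsCoord : Measurable (minAbsCoord : EuclideanSpace ℝ ι → ℝ) :=
  Measurable.iInf fun i ↦ by fun_prop

theorem exp_neg_norm_sq (x : EuclideanSpace ℝ ι) : exp (-‖x‖ ^ 2) = ∏ i, exp (-x i ^ 2) := by
  rw [EuclideanSpace.norm_sq_eq, ← Finset.sum_neg_distrib, exp_sum]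
  simp only [Real.norm_eq_abs, sq_abs]

theorem integral_prod_apply_eq_pow (g : ℝ → ℝ) :
    ∫ x : EuclideanSpace ℝ ι, ∏ i, g (x i) = (∫ u, g u) ^ Fintype.card ι := by
  rw [← (PiLp.volume_preserving_toLp ι).integral_comp
    (MeasurableEquiv.toLp 2 _).measurableEmbedding]
  exact integral_fintype_prod_volume_eq_pow g

variable [Nonempty ι]

theorem minAbsCoord_le_norm (x : EuclideanSpace ℝ ι) : minAbsCoord x ≤ ‖x‖ :=
  (ciInf_le (Finite.bddBelow_range _) (Classical.arbitrary ι)).trans (PiLp.norm_apply_le x _)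

theorem lt_minAbsCoord_iff {t : ℝ} {x : EuclideanSpace ℝ ι} :
    t < minAbsCoord x ↔ ∀ i, t < |x i| := by
  refine ⟨fun h i ↦ h.trans_le (ciInf_le (Finite.bddBelow_range _) i), fun h ↦ ?_⟩
  obtain ⟨i, hi⟩ := exists_eq_ciInf_of_finite (f := fun i ↦ |x i|)
  exact (h i).trans_eq hi

theorem setIntegral_lt_minAbsCoord_exp_neg_norm_sq {t : ℝ} (ht : 0 ≤ t) :
    ∫ x in {x : EuclideanSpace ℝ ι | t < minAbsCoord x}, exp (-‖x‖ ^ 2) =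
      (√π - ∫ u in -t..t, exp (-u ^ 2)) ^ Fintype.card ι := by
  rw [← setIntegral_lt_abs_exp_neg_sq ht, ← integral_indicator (measurableSet_lt measurable_const
    continuous_abs.measurable), ← integral_prod_apply_eq_pow,
    ← integral_indicator (measurableSet_lt measurable_const measurable_minAbsCoord)]
  refine integral_congr_ae (.of_forall fun x ↦ ?_)
  simp only [indicator_apply, mem_ofPred_eq]
  by_cases hx : t < minAbsCoord x
  · rw [if_pos hx, exp_neg_norm_sq]
    exact Finset.prod_congr rfl fun i _ ↦ (if_pos (lt_minAbsCoord_iff.1 hx i)).symm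
  · obtain ⟨i, hi⟩ := not_forall.1 (mt lt_minAbsCoord_iff.2 hx)
    rw [if_neg hx, Finset.prod_eq_zero (Finset.mem_univ i) (if_neg hi)]

theorem integral_minAbsCoord_mul_exp_neg_norm_sq :
    ∫ x : EuclideanSpace ℝ ι, minAbsCoord x * exp (-‖x‖ ^ 2) =
      ∫ t in Ioi 0, (√π - ∫ u in -t..t, exp (-u ^ 2)) ^ Fintype.card ι := by
  have hint : Integrable (fun x : EuclideanSpace ℝ ι ↦ minAbsCoord x * exp (-‖x‖ ^ 2)) := by
    refine (integrable_norm_pow_mul_exp_neg_norm_sq volume 1).mono'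
      (measurable_minAbsCoord.mul (by fun_prop)).aestronglyMeasurable (.of_forall fun x ↦ ?_)
    rw [pow_one, norm_mul, norm_of_nonneg (minAbsCoord_nonneg x), norm_of_nonneg (exp_pos _).le]
    exact mul_le_mul_of_nonneg_right (minAbsCoord_le_norm x) (exp_pos _).le
  rw [integral_mul_eq_integral_setIntegral_lt measurable_minAbsCoord minAbsCoord_nonneg
    (by fun_prop) (fun _ ↦ (exp_pos _).le) hint]
  exact setIntegral_congr_fun measurableSet_Ioi fun t ht ↦
    setIntegral_lt_minAbsCoord_exp_neg_norm_sq ht.out.le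

end EuclideanSpace

open EuclideanSpace

/-- **Integral formula for `Emin`:**
`Emin n = (Γ(n/2)/Γ((n+1)/2)) · ∫₀^∞ (1 - (1/√π) ∫_{-y}^{y} e^{-x²} dx)ⁿ dy`. -/
theorem Emin_eq_integral_formula (n : ℕ) (hn : 1 ≤ n) :
    Emin n = (Real.Gamma (n / 2) / Real.Gamma ((n + 1) / 2)) *
      ∫ y in Set.Ioi (0 : ℝ),
        (1 - (Real.sqrt Real.pi)⁻¹ * ∫ x in (-y)..y, Real.exp (-x ^ 2)) ^ n := by
  have : Nonempty (Fin n) := ⟨⟨0, hn⟩⟩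
  have hpolar := integral_homogeneous_mul_radial (volume : Measure (EuclideanSpace ℝ (Fin n))) 1
    (f := minAbsCoord) (fun r hr _ _ ↦ by rw [pow_one, minAbsCoord_smul hr.le]) fun r ↦ exp (-r ^ 2)
  rw [finrank_euclideanSpace_fin, Nat.sub_add_cancel hn, setIntegral_Ioi_pow_mul_exp_neg_sq,
    integral_minAbsCoord_mul_exp_neg_norm_sq, Fintype.card_fin] at hpolar
  have hscale : ∫ t in Ioi 0, (√π - ∫ u in -t..t, exp (-u ^ 2)) ^ n =
      √π ^ n * ∫ y in Ioi 0, (1 - (√π)⁻¹ * ∫ x in -y..y, exp (-x ^ 2)) ^ n := by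
    rw [← integral_const_mul]
    refine setIntegral_congr_fun measurableSet_Ioi fun t _ ↦ ?_
    rw [← mul_pow]
    field_simp
  set J := ∫ y in Ioi 0, (1 - (√π)⁻¹ * ∫ x in -y..y, exp (-x ^ 2)) ^ n
  set S := ∫ y : sphere (0 : EuclideanSpace ℝ (Fin n)) 1,
    minAbsCoord (y : EuclideanSpace ℝ (Fin n)) ∂volume.toSphere
  rw [Emin, ← measureReal_def, toSphere_real_univ, Fintype.card_fin]
  change _ * S = _
  field_simp
  linarith
end

section
/- Let F(y) = (1/√π) ∫_{−y}^{y} e^{−x²} dx for y ≥ 0 (the cumulative distribution function of the absolute value of a centered Gaussian with variance 1/2). Then as n → ∞, ∫₀^∞ (1 − F(y))ⁿ dy = √π/(2(n+1)) + o(n^{−2}); that is, n² · (∫₀^∞ (1 − F(y))ⁿ dy − √π/(2(n+1))) → 0. -/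
/-! Since `F' = (2/√π) e^{-y²}`, the function `(1 - F)ⁿ F'` is the derivative of
`-(1 - F)ⁿ⁺¹/(n+1)`, so `∫₀^∞ (1 - F(y))ⁿ e^{-y²} dy = √π/(2(n+1))` exactly and the error is
`∫₀^∞ (1 - F(y))ⁿ (1 - e^{-y²}) dy ≥ 0`. Comparing `e^{-x²}` with `e^{-x}` on `[0, 1]` and on
`[1, ∞)` gives `1 - F(y) ≤ e^{-y/2}`; together with `1 - e^{-y²} ≤ y²` this bounds the error by
`∫₀^∞ y² e^{-ny/2} dy = 16/n³`. -/

open MeasureTheory Real Filter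

/-- The cumulative distribution function of `|Z|` where `Z` is a centered Gaussian of
variance `1/2`: `F y = (1/√π) ∫_{-y}^{y} e^{-x²} dx`. -/
noncomputable def gaussAbsCDF (y : ℝ) : ℝ :=
  (Real.sqrt Real.pi)⁻¹ * ∫ x in (-y)..y, Real.exp (-x ^ 2)

open Set Topology

theorem integral_Ioi_one_sub_pow_mul_deriv {G g : ℝ → ℝ} {a : ℝ} (n : ℕ)
    (hG : ∀ y ∈ Ici a, HasDerivAt G (g y) y) (hG_le : ∀ y ∈ Ioi a, G y ≤ 1)
    (hg : ∀ y ∈ Ioi a, 0 ≤ g y) (hG_lim : Tendsto G atTop (𝓝 1)) :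
    ∫ y in Ioi a, (1 - G y) ^ n * g y = (1 - G a) ^ (n + 1) / (n + 1) := by
  have hprim : ∀ y ∈ Ici a, HasDerivAt (fun y => -(1 - G y) ^ (n + 1) / (n + 1))
      ((1 - G y) ^ n * g y) y := fun y hy => by
    refine ((((hG y hy).const_sub 1).pow (n + 1)).neg.div_const ((n : ℝ) + 1)).congr_deriv ?_
    push_cast
    field_simp
  have hlim : Tendsto (fun y => -(1 - G y) ^ (n + 1) / (n + 1)) atTop (𝓝 0) := by
    simpa using (((hG_lim.const_sub 1).pow (n + 1)).neg.div_const ((n : ℝ) + 1))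
  rw [integral_Ioi_of_hasDerivAt_of_nonneg' hprim
    (fun y hy => mul_nonneg (pow_nonneg (sub_nonneg.2 (hG_le y hy)) n) (hg y hy)) hlim]
  ring

theorem integral_Ioi_sq_mul_exp_neg_mul {r : ℝ} (hr : 0 < r) :
    ∫ y in Ioi (0 : ℝ), y ^ 2 * exp (-r * y) = 2 / r ^ 3 := by
  have h := integral_rpow_mul_exp_neg_mul_Ioi (a := 3) (by norm_num) hr
  norm_num [Real.Gamma_nat_eq_factorial, show (3 : ℝ) = 2 + 1 by norm_num] at h
  simp only [neg_mul, h]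
  ring

theorem integrableOn_Ioi_sq_mul_exp_neg_mul {r : ℝ} (hr : 0 < r) :
    IntegrableOn (fun y : ℝ => y ^ 2 * exp (-r * y)) (Ioi 0) := by
  simpa using integrableOn_rpow_mul_exp_neg_mul_rpow (s := 2) (p := 1) (by norm_num) one_pos hr

theorem integrable_exp_neg_sq : Integrable fun x : ℝ => exp (-x ^ 2) := by
  simpa using integrable_exp_neg_mul_sq one_pos

theorem integral_Ioi_zero_exp_neg_sq : ∫ x in Ioi (0 : ℝ), exp (-x ^ 2) = √π / 2 := by
  simpa using integral_gaussian_Ioi 1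

theorem one_sub_exp_neg_sq_nonneg (y : ℝ) : 0 ≤ 1 - exp (-y ^ 2) :=
  sub_nonneg.2 (exp_le_one_iff.2 (neg_nonpos.2 (sq_nonneg y)))

theorem gaussAbsCDF_eq_intervalIntegral (y : ℝ) :
    gaussAbsCDF y = 2 / √π * ∫ x in (0 : ℝ)..y, exp (-x ^ 2) := by
  have hsymm : ∫ x in (-y)..0, exp (-x ^ 2) = ∫ x in (0 : ℝ)..y, exp (-x ^ 2) := by
    have h := intervalIntegral.integral_comp_neg (a := 0) (b := y) fun x => exp (-x ^ 2)
    simp only [neg_sq, neg_zero] at h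
    exact h.symm
  rw [gaussAbsCDF, ← intervalIntegral.integral_add_adjacent_intervals
    integrable_exp_neg_sq.intervalIntegrable integrable_exp_neg_sq.intervalIntegrable,
    hsymm]
  ring

theorem one_sub_gaussAbsCDF_eq (y : ℝ) :
    1 - gaussAbsCDF y = 2 / √π * ∫ x in Ioi y, exp (-x ^ 2) := by
  have hπ : √π ≠ 0 := by positivity
  rw [gaussAbsCDF_eq_intervalIntegral, ← intervalIntegral.integral_Ioi_sub_Ioi'
    integrable_exp_neg_sq.integrableOn integrable_exp_neg_sq.integrableOn,
    integral_Ioi_zero_exp_neg_sq]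
  field_simp
  ring

theorem hasDerivAt_gaussAbsCDF (y : ℝ) : HasDerivAt gaussAbsCDF (2 / √π * exp (-y ^ 2)) y := by
  have hcont : Continuous fun x : ℝ => exp (-x ^ 2) := by fun_prop
  rw [funext gaussAbsCDF_eq_intervalIntegral]
  exact (intervalIntegral.integral_hasDerivAt_right (hcont.intervalIntegrable _ _)
    hcont.stronglyMeasurable.stronglyMeasurableAtFilter hcont.continuousAt).const_mul _

theorem continuous_gaussAbsCDF : Continuous gaussAbsCDF :=
  continuous_iff_continuousAt.2 fun y => (hasDerivAt_gaussAbsCDF y).continuousAt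

theorem tendsto_gaussAbsCDF_atTop : Tendsto gaussAbsCDF atTop (𝓝 1) := by
  have hπ : √π ≠ 0 := by positivity
  have h := (intervalIntegral_tendsto_integral_Ioi 0 integrable_exp_neg_sq.integrableOn
    tendsto_id).const_mul (2 / √π)
  rw [integral_Ioi_zero_exp_neg_sq, div_mul_div_cancel₀ hπ, div_self two_ne_zero] at h
  simpa [funext gaussAbsCDF_eq_intervalIntegral] using h

@[simp]
theorem gaussAbsCDF_zero : gaussAbsCDF 0 = 0 := by
  simp [gaussAbsCDF]

theorem gaussAbsCDF_le_one (y : ℝ) : gaussAbsCDF y ≤ 1 := by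
  have htail : 0 ≤ ∫ x in Ioi y, exp (-x ^ 2) :=
    setIntegral_nonneg measurableSet_Ioi fun x _ => (exp_pos _).le
  have := one_sub_gaussAbsCDF_eq y ▸ mul_nonneg (by positivity : 0 ≤ 2 / √π) htail
  linarith

theorem one_sub_gaussAbsCDF_le_exp_neg {y : ℝ} (hy₀ : 0 ≤ y) (hy₁ : y ≤ 1) :
    1 - gaussAbsCDF y ≤ exp (-y) := by
  have hcmp : ∫ x in (0 : ℝ)..y, exp (-x) ≤ ∫ x in (0 : ℝ)..y, exp (-x ^ 2) :=
    intervalIntegral.integral_mono_on hy₀ (Continuous.intervalIntegrable (by fun_prop) _ _)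
      integrable_exp_neg_sq.intervalIntegrable fun x hx =>
      exp_le_exp.2 (by nlinarith [hx.1, hx.2])
  have hexp : ∫ x in (0 : ℝ)..y, exp (-x) = 1 - exp (-y) := by
    simp [intervalIntegral.integral_comp_neg]
  have hπ : 1 ≤ 2 / √π := by
    rw [one_le_div (by positivity), sqrt_le_left (by norm_num)]
    linarith [pi_le_four]
  have hI : 0 ≤ ∫ x in (0 : ℝ)..y, exp (-x ^ 2) :=
    intervalIntegral.integral_nonneg hy₀ fun x _ => (exp_pos _).le
  rw [gaussAbsCDF_eq_intervalIntegral]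
  nlinarith

theorem one_sub_gaussAbsCDF_le_mul_exp_neg {y : ℝ} (hy : 1 ≤ y) :
    1 - gaussAbsCDF y ≤ 2 / √π * exp (-y) := by
  rw [one_sub_gaussAbsCDF_eq, ← integral_exp_neg_Ioi]
  refine mul_le_mul_of_nonneg_left (setIntegral_mono_on integrable_exp_neg_sq.integrableOn
    (by simpa using exp_neg_integrableOn_Ioi y one_pos) measurableSet_Ioi fun x hx => ?_)
    (by positivity)
  exact exp_le_exp.2 (by nlinarith [mem_Ioi.1 hx])

theorem one_sub_gaussAbsCDF_le_exp_neg_half {y : ℝ} (hy : 0 ≤ y) :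
    1 - gaussAbsCDF y ≤ exp (-(y / 2)) := by
  rcases le_total y 1 with hy₁ | hy₁
  · exact (one_sub_gaussAbsCDF_le_exp_neg hy hy₁).trans (exp_le_exp.2 (by linarith))
  · have hsqrtπ : 4 / 3 ≤ √π := by
      rw [le_sqrt (by norm_num) pi_pos.le]
      linarith [pi_gt_three]
    have hexp : 3 / 2 ≤ exp (1 / 2) := by linarith [add_one_le_exp (1 / 2 : ℝ)]
    have hconst : 2 / √π * exp (-(1 / 2)) ≤ 1 := by
      rw [exp_neg, ← div_eq_mul_inv, div_div, div_le_one (by positivity)]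
      nlinarith
    calc 1 - gaussAbsCDF y ≤ 2 / √π * exp (-y) := one_sub_gaussAbsCDF_le_mul_exp_neg hy₁
      _ ≤ 2 / √π * (exp (-(1 / 2)) * exp (-(y / 2))) := by
        rw [← exp_add]
        gcongr
        linarith
      _ ≤ exp (-(y / 2)) := by
        rw [← mul_assoc]
        exact mul_le_of_le_one_left (exp_pos _).le hconst

theorem one_sub_gaussAbsCDF_pow_le (n : ℕ) {y : ℝ} (hy : 0 ≤ y) :
    (1 - gaussAbsCDF y) ^ n ≤ exp (-(n / 2) * y) := by
  calc (1 - gaussAbsCDF y) ^ n ≤ exp (-(y / 2)) ^ n :=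
        pow_le_pow_left₀ (sub_nonneg.2 (gaussAbsCDF_le_one y))
          (one_sub_gaussAbsCDF_le_exp_neg_half hy) n
    _ = exp (-(n / 2) * y) := by rw [← exp_nat_mul]; ring_nf

theorem integrableOn_one_sub_gaussAbsCDF_pow {n : ℕ} (hn : n ≠ 0) :
    IntegrableOn (fun y => (1 - gaussAbsCDF y) ^ n) (Ioi 0) := by
  refine (exp_neg_integrableOn_Ioi 0 (by positivity : (0 : ℝ) < n / 2)).mono'
    ((continuous_const.sub continuous_gaussAbsCDF).pow n).aestronglyMeasurable
    ((ae_restrict_iff' measurableSet_Ioi).2 (Eventually.of_forall fun y hy => ?_))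
  rw [norm_of_nonneg (pow_nonneg (sub_nonneg.2 (gaussAbsCDF_le_one y)) n)]
  exact one_sub_gaussAbsCDF_pow_le n (le_of_lt hy)

theorem integral_one_sub_gaussAbsCDF_pow_mul_exp_neg_sq (n : ℕ) :
    ∫ y in Ioi (0 : ℝ), (1 - gaussAbsCDF y) ^ n * exp (-y ^ 2) = √π / (2 * (n + 1)) := by
  have h := integral_Ioi_one_sub_pow_mul_deriv (a := 0) n (fun y _ => hasDerivAt_gaussAbsCDF y)
    (fun y _ => gaussAbsCDF_le_one y) (fun y _ => by positivity) tendsto_gaussAbsCDF_atTop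
  simp only [gaussAbsCDF_zero, sub_zero, one_pow, mul_left_comm _ (2 / √π),
    integral_const_mul] at h
  have hπ : √π ≠ 0 := by positivity
  field_simp at h ⊢
  linarith

theorem integral_one_sub_gaussAbsCDF_pow_sub {n : ℕ} (hn : n ≠ 0) :
    (∫ y in Ioi (0 : ℝ), (1 - gaussAbsCDF y) ^ n) - √π / (2 * (n + 1)) =
      ∫ y in Ioi (0 : ℝ), (1 - gaussAbsCDF y) ^ n * (1 - exp (-y ^ 2)) := by
  have hint := integrableOn_one_sub_gaussAbsCDF_pow hn
  rw [← integral_one_sub_gaussAbsCDF_pow_mul_exp_neg_sq, ← integral_sub hint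
    (hint.mul_bdd (c := 1) (by fun_prop) (Eventually.of_forall fun y => ?_))]
  · simp only [mul_one_sub]
  · rw [norm_of_nonneg (exp_pos _).le, exp_le_one_iff]
    exact neg_nonpos.2 (sq_nonneg y)

theorem one_sub_gaussAbsCDF_pow_mul_one_sub_exp_neg_sq_nonneg (n : ℕ) (y : ℝ) :
    0 ≤ (1 - gaussAbsCDF y) ^ n * (1 - exp (-y ^ 2)) :=
  mul_nonneg (pow_nonneg (sub_nonneg.2 (gaussAbsCDF_le_one y)) n) (one_sub_exp_neg_sq_nonneg y)

theorem integral_one_sub_gaussAbsCDF_pow_mul_one_sub_exp_neg_sq_le {n : ℕ} (hn : n ≠ 0) :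
    ∫ y in Ioi (0 : ℝ), (1 - gaussAbsCDF y) ^ n * (1 - exp (-y ^ 2)) ≤ 16 / n ^ 3 := by
  have hr : (0 : ℝ) < n / 2 := by positivity
  calc ∫ y in Ioi (0 : ℝ), (1 - gaussAbsCDF y) ^ n * (1 - exp (-y ^ 2))
      ≤ ∫ y in Ioi (0 : ℝ), y ^ 2 * exp (-(n / 2) * y) := by
        refine integral_mono_of_nonneg ?_ (integrableOn_Ioi_sq_mul_exp_neg_mul hr) ?_
        · exact Eventually.of_forall (one_sub_gaussAbsCDF_pow_mul_one_sub_exp_neg_sq_nonneg n)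
        · filter_upwards [ae_restrict_mem measurableSet_Ioi] with y hy
          rw [mul_comm (y ^ 2)]
          exact mul_le_mul (one_sub_gaussAbsCDF_pow_le n (le_of_lt hy))
            (by linarith [add_one_le_exp (-y ^ 2)]) (one_sub_exp_neg_sq_nonneg y) (exp_pos _).le
    _ = 16 / n ^ 3 := by
        rw [integral_Ioi_sq_mul_exp_neg_mul hr]
        field_simp
        ring

/-- **Asymptotics of `∫₀^∞ (1 - F y)ⁿ dy`:** as `n → ∞`,
`∫₀^∞ (1 - F y)ⁿ dy = √π/(2(n+1)) + o(n⁻²)`, i.e.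
`n² · (∫₀^∞ (1 - F y)ⁿ dy - √π/(2(n+1))) → 0`. -/
theorem integral_one_sub_gaussAbsCDF_pow_asymptotic :
    Tendsto (fun n : ℕ => (n : ℝ) ^ 2 *
        ((∫ y in Set.Ioi (0 : ℝ), (1 - gaussAbsCDF y) ^ n) -
          Real.sqrt Real.pi / (2 * (n + 1))))
      atTop (nhds 0) := by
  refine tendsto_of_tendsto_of_tendsto_of_le_of_le' tendsto_const_nhds
    (tendsto_const_div_atTop_nhds_zero_nat 16) ?_ ?_
  · filter_upwards [eventually_ne_atTop 0] with n hn
    rw [integral_one_sub_gaussAbsCDF_pow_sub hn]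
    exact mul_nonneg (sq_nonneg _) (setIntegral_nonneg measurableSet_Ioi fun y _ =>
      one_sub_gaussAbsCDF_pow_mul_one_sub_exp_neg_sq_nonneg n y)
  · filter_upwards [eventually_ne_atTop 0] with n hn
    rw [integral_one_sub_gaussAbsCDF_pow_sub hn]
    calc (n : ℝ) ^ 2 * ∫ y in Ioi (0 : ℝ), (1 - gaussAbsCDF y) ^ n * (1 - exp (-y ^ 2))
        ≤ (n : ℝ) ^ 2 * (16 / n ^ 3) :=
          mul_le_mul_of_nonneg_left
            (integral_one_sub_gaussAbsCDF_pow_mul_one_sub_exp_neg_sq_le hn) (sq_nonneg _)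
      _ = 16 / (n : ℝ) := by
          field_simp
end

section
/- Let X₁, X₂, … be independent identically distributed random variables supported on [0, ∞) with common cumulative distribution function F. Suppose (1) F has a density f that is continuous and nonvanishing in a neighborhood of 0 (in particular f(0) > 0), and (2) the function 1 − F belongs to L^p([0, ∞)) for some p > 0. Then as n → ∞, E[min(X₁, …, Xₙ)] ∼ 1/(f(0) · (n+1)); that is, f(0) · (n+1) · E[min(X₁, …, Xₙ)] → 1. -/
open MeasureTheory ProbabilityTheory Filter Set

lemma aux_prod {Ω : Type*} [MeasurableSpace Ω] (P : Measure Ω)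
    [IsProbabilityMeasure P] (X : ℕ → Ω → ℝ) (hmeas : ∀ i, Measurable (X i))
    (hindep : iIndepFun X P)
    (hident : ∀ i, IdentDistrib (X i) (X 0) P P)
    (F : ℝ → ℝ)
    (hF : ∀ i, ∀ y : ℝ, F y = (P {ω | X i ω ≤ y}).toReal)
    (n : ℕ) (hn : 1 ≤ n) (y : ℝ) :
    P {ω | y < ⨅ i : Fin n, X i ω} = ENNReal.ofReal ((1 - F y)^n) := by
  have hne : Nonempty (Fin n) := Fin.pos_iff_nonempty.mp hn
  have hset : {ω | y < ⨅ i : Fin n, X i ω} = ⋂ i ∈ Finset.range n, X i ⁻¹' (Set.Ioi y) := by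
    ext ω
    simp only [Set.mem_setOf_eq, Set.mem_iInter, Set.mem_preimage, Set.mem_Ioi,
      Finset.mem_range]
    constructor
    · intro h i hi
      exact h.trans_le (ciInf_le (Set.Finite.bddBelow (Set.finite_range _)) (⟨i, hi⟩ : Fin n))
    · intro h
      obtain ⟨i, hi⟩ := exists_eq_ciInf_of_finite (f := fun i : Fin n => X i ω)
      rw [← hi]; exact h i i.2
  rw [hset, hindep.meas_biInter (fun i _ => ⟨Set.Ioi y, measurableSet_Ioi, rfl⟩)]
  have hident' : ∀ i : ℕ, P (X i ⁻¹' Set.Ioi y) = ENNReal.ofReal (1 - F y) := by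
    intro i
    have h1 : P (X i ⁻¹' Set.Ioi y) = P (X 0 ⁻¹' Set.Ioi y) :=
      (hident i).measure_mem_eq measurableSet_Ioi
    have h2 : X 0 ⁻¹' Set.Ioi y = {ω | X 0 ω ≤ y}ᶜ := by
      ext ω; simp [not_le]
    have h3 : MeasurableSet {ω | X 0 ω ≤ y} := measurableSet_le (hmeas 0) measurable_const
    rw [h1, h2, measure_compl h3 (measure_ne_top _ _), measure_univ, hF 0 y]
    rw [ENNReal.ofReal_sub _ (ENNReal.toReal_nonneg), ENNReal.ofReal_one,
      ENNReal.ofReal_toReal (measure_ne_top _ _)]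
  rw [Finset.prod_congr rfl (fun i _ => hident' i), Finset.prod_const, Finset.card_range]
  rw [← ENNReal.ofReal_pow]
  have : (P {ω | X 0 ω ≤ y}).toReal ≤ 1 := by
    rw [← ENNReal.toReal_one]
    exact ENNReal.toReal_mono ENNReal.one_ne_top prob_le_one
  rw [hF 0 y]; linarith

-- auxiliary: ∫ y in 0..δ, (1-c y)^n
lemma aux_geom_int (c δ : ℝ) (hc : 0 < c) (n : ℕ) :
    ∫ y in (0:ℝ)..δ, (1 - c*y)^n = (1 - (1 - c*δ)^(n+1)) / (c*(n+1)) := by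
  have hderiv : ∀ y ∈ Set.uIcc (0:ℝ) δ,
      HasDerivAt (fun y => -(1 - c*y)^(n+1) / (c*(n+1))) ((1 - c*y)^n) y := by
    intro y _
    have h1 : HasDerivAt (fun y : ℝ => 1 - c*y) (-c) y := by
      simpa using ((hasDerivAt_id y).const_mul c).const_sub 1
    have h2 : HasDerivAt (fun y : ℝ => (1 - c*y)^(n+1))
        (((n:ℝ)+1) * (1 - c*y)^n * (-c)) y := by
      simpa [Nat.cast_add, Pi.pow_def] using (h1.pow (n+1))
    have h3 := (h2.neg).div_const (c*((n:ℝ)+1))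
    refine h3.congr_deriv ?_
    rw [div_eq_iff (by positivity)]
    ring
  have hcont : IntervalIntegrable (fun y : ℝ => (1 - c*y)^n) volume 0 δ := by
    apply Continuous.intervalIntegrable
    continuity
  have := intervalIntegral.integral_eq_sub_of_hasDerivAt hderiv hcont
  rw [this]
  have hne : c*((n:ℝ)+1) ≠ 0 := by positivity
  field_simp
  ring

lemma aux_arith (x c q u : ℝ) (hc : c ≠ 0) (hu : u ≠ 0) :
    x * u * ((1-q)/(c*u)) = (x/c)*(1-q) := by
  field_simp

set_option maxHeartbeats 2000000 in
lemma aux_tendsto (F f : ℝ → ℝ) (ε : ℝ) (hε : 0 < ε)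
    (hcont : ContinuousOn f (Set.Icc 0 ε))
    (hfpos : ∀ y ∈ Set.Icc 0 ε, 0 < f y)
    (hdens : ∀ y ∈ Set.Icc 0 ε, F y = ∫ t in (0:ℝ)..y, f t)
    (hFmono : Monotone F) (hF0 : ∀ y, 0 ≤ F y) (hF1 : ∀ y, F y ≤ 1)
    (m : ℕ) (hm : 1 ≤ m)
    (hint : IntegrableOn (fun y => (1 - F y)^m) (Set.Ioi 0) volume) :
    Tendsto (fun n : ℕ => f 0 * ((n:ℝ)+1) * ∫ y in Set.Ioi (0:ℝ), (1-F y)^n)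
      atTop (nhds 1) := by
  have hf0 : 0 < f 0 := hfpos 0 ⟨le_refl _, hε.le⟩
  have hFmeas : Measurable F := hFmono.measurable
  have hG01 : ∀ y, 0 ≤ 1 - F y ∧ 1 - F y ≤ 1 := fun y => ⟨by linarith [hF1 y], by linarith [hF0 y]⟩
  -- integrability of (1-F)^n for n ≥ m
  have hintn : ∀ n, m ≤ n → IntegrableOn (fun y => (1-F y)^n) (Set.Ioi 0) volume := by
    intro n hn
    refine Integrable.mono hint ((measurable_const.sub hFmeas).pow_const n).aestronglyMeasurable ?_
    refine Filter.Eventually.of_forall (fun y => ?_)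
    rw [Real.norm_eq_abs, Real.norm_eq_abs, abs_of_nonneg (pow_nonneg (hG01 y).1 _),
      abs_of_nonneg (pow_nonneg (hG01 y).1 _)]
    exact pow_le_pow_of_le_one (hG01 y).1 (hG01 y).2 hn
  -- nonnegativity of integrands
  have hnn : ∀ n : ℕ, ∀ y : ℝ, 0 ≤ (1 - F y)^n := fun n y => pow_nonneg (hG01 y).1 _
  set C : ℝ := ∫ y in Set.Ioi (0:ℝ), (1-F y)^m with hC
  have hC0 : 0 ≤ C := setIntegral_nonneg measurableSet_Ioi (fun y _ => hnn m y)
  -- bounds for F near 0 : given η get δ with sandwich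
  rw [Metric.tendsto_atTop]
  intro t ht
  set η : ℝ := min (t/4) (1/2) with hη
  have hη0 : 0 < η := lt_min (by linarith) (by norm_num)
  have hη2 : η ≤ 1/2 := min_le_right _ _
  have hηt : η ≤ t/4 := min_le_left _ _
  -- δ₀ from continuity
  obtain ⟨δ₀, hδ₀pos, hδ₀ε, hδ₀⟩ : ∃ δ₀ : ℝ, 0 < δ₀ ∧ δ₀ ≤ ε ∧
      ∀ y ∈ Set.Icc 0 δ₀, |f y - f 0| ≤ η * f 0 := by
    have hc0 : ContinuousWithinAt f (Set.Icc 0 ε) 0 := hcont 0 ⟨le_refl _, hε.le⟩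
    rw [Metric.continuousWithinAt_iff] at hc0
    obtain ⟨d, hd, hball⟩ := hc0 (η * f 0) (by positivity)
    refine ⟨min (d/2) ε, lt_min (by linarith) hε, min_le_right _ _, ?_⟩
    intro y hy
    have hyε : y ∈ Set.Icc 0 ε := ⟨hy.1, hy.2.trans (min_le_right _ _)⟩
    have : dist y 0 < d := by
      rw [Real.dist_eq, sub_zero, abs_of_nonneg hy.1]
      exact lt_of_le_of_lt (hy.2.trans (min_le_left _ _)) (by linarith)
    exact le_of_lt (by simpa [Real.dist_eq] using hball hyε this)
  set a : ℝ := (1-η) * f 0 with ha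
  set b : ℝ := (1+η) * f 0 with hb
  have ha0 : 0 < a := by
    have : (0:ℝ) < 1 - η := by linarith
    positivity
  have hb0 : 0 < b := by positivity
  have hab : a ≤ b := by nlinarith
  set δ : ℝ := min δ₀ (1/(2*b)) with hδdef
  have hδ0 : 0 < δ := lt_min hδ₀pos (by positivity)
  have hδε : δ ≤ ε := le_trans (min_le_left _ _) hδ₀ε
  have hbδ : b * δ ≤ 1/2 := by
    have h1 : δ ≤ 1/(2*b) := min_le_right _ _
    have h3 : b * (1/(2*b)) = 1/2 := by field_simp
    nlinarith
  have haδ : a * δ ≤ 1/2 := le_trans (by nlinarith) hbδ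
  -- sandwich: a*y ≤ F y ≤ b*y on Icc 0 δ
  have hsand : ∀ y ∈ Set.Icc 0 δ, a * y ≤ F y ∧ F y ≤ b * y := by
    intro y hy
    have hyε : y ∈ Set.Icc 0 ε := ⟨hy.1, hy.2.trans hδε⟩
    have hsub : Set.uIcc (0:ℝ) y ⊆ Set.Icc 0 ε := by
      rw [Set.uIcc_of_le hy.1]; exact Set.Icc_subset_Icc le_rfl hyε.2
    have hfi : IntervalIntegrable f volume 0 y :=
      (hcont.mono hsub).intervalIntegrable
    have hbd : ∀ u ∈ Set.Icc (0:ℝ) y, a ≤ f u ∧ f u ≤ b := by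
      intro u hu
      have hu' : u ∈ Set.Icc 0 δ₀ := ⟨hu.1, hu.2.trans (hy.2.trans (min_le_left _ _))⟩
      have := hδ₀ u hu'
      rw [abs_le] at this
      constructor
      · simp only [ha]; nlinarith [this.1]
      · simp only [hb]; nlinarith [this.2]
    rw [hdens y hyε]
    constructor
    · have h1 := intervalIntegral.integral_mono_on hy.1 (intervalIntegrable_const (c := a)) hfi
        (fun u hu => (hbd u hu).1)
      rw [intervalIntegral.integral_const, smul_eq_mul, sub_zero, mul_comm] at h1
      exact h1
    · have h1 := intervalIntegral.integral_mono_on hy.1 hfi (intervalIntegrable_const (c := b))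
        (fun u hu => (hbd u hu).2)
      rw [intervalIntegral.integral_const, smul_eq_mul, sub_zero, mul_comm] at h1
      exact h1
  -- positivity of F δ, tail ratio r
  set r : ℝ := 1 - F δ with hrdef
  have hr0 : 0 ≤ r := (hG01 δ).1
  have hFδpos : 0 < F δ := by
    rw [hdens δ ⟨hδ0.le, hδε⟩]
    apply intervalIntegral.intervalIntegral_pos_of_pos_on
    · refine ContinuousOn.intervalIntegrable (hcont.mono ?_)
      rw [Set.uIcc_of_le hδ0.le]
      exact Set.Icc_subset_Icc le_rfl hδε
    · exact fun x hx => hfpos x ⟨hx.1.le, hx.2.le.trans hδε⟩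
    · exact hδ0
  have hr1 : r < 1 := by simp only [hrdef]; linarith
  -- split of the integral
  have hsplit : ∀ n, m ≤ n → (∫ y in Set.Ioi (0:ℝ), (1-F y)^n) =
      (∫ y in Set.Ioc (0:ℝ) δ, (1-F y)^n) + ∫ y in Set.Ioi δ, (1-F y)^n := by
    intro n hn
    rw [← Set.Ioc_union_Ioi_eq_Ioi hδ0.le]
    exact setIntegral_union (Set.Ioc_disjoint_Ioi le_rfl) measurableSet_Ioi
      ((hintn n hn).mono_set Set.Ioc_subset_Ioi_self)
      ((hintn n hn).mono_set (Set.Ioi_subset_Ioi hδ0.le))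
  -- tail bound
  have htail : ∀ n, m ≤ n → (∫ y in Set.Ioi δ, (1-F y)^n) ≤ r^(n-m) * C := by
    intro n hn
    have hIm : IntegrableOn (fun y => (1-F y)^m) (Set.Ioi δ) volume :=
      hint.mono_set (Set.Ioi_subset_Ioi hδ0.le)
    have h2 : (∫ y in Set.Ioi δ, (1-F y)^n) ≤ ∫ y in Set.Ioi δ, r^(n-m) * (1-F y)^m := by
      apply setIntegral_mono_on ((hintn n hn).mono_set (Set.Ioi_subset_Ioi hδ0.le))
        (hIm.const_mul _) measurableSet_Ioi
      intro y hy
      have h1 : 1 - F y ≤ r := by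
        simp only [hrdef]; linarith [hFmono (le_of_lt hy)]
      calc (1-F y)^n = (1-F y)^(n-m) * (1-F y)^m := by rw [← pow_add]; congr 1; omega
      _ ≤ r^(n-m) * (1-F y)^m :=
        mul_le_mul_of_nonneg_right (pow_le_pow_left₀ (hG01 y).1 h1 _) (hnn m y)
    have h3 : (∫ y in Set.Ioi δ, r^(n-m) * (1-F y)^m)
        = r^(n-m) * ∫ y in Set.Ioi δ, (1-F y)^m := integral_const_mul _ _
    have h4 : (∫ y in Set.Ioi δ, (1-F y)^m) ≤ C :=
      setIntegral_mono_set hint (Filter.Eventually.of_forall (fun y => hnn m y))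
        ((Set.Ioi_subset_Ioi hδ0.le).eventuallyLE)
    calc (∫ y in Set.Ioi δ, (1-F y)^n) ≤ _ := h2
    _ = _ := h3
    _ ≤ r^(n-m) * C := mul_le_mul_of_nonneg_left h4 (pow_nonneg hr0 _)
  -- bounds on the main part
  have hq0b : 0 ≤ 1 - b*δ := by linarith [hbδ]
  have hq0a : 0 ≤ 1 - a*δ := by linarith [haδ]
  have hq1b : 1 - b*δ < 1 := by have := mul_pos hb0 hδ0; linarith
  have hlowmain : ∀ n, m ≤ n → ((1 - (1-b*δ)^(n+1)) / (b*((n:ℝ)+1)))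
      ≤ ∫ y in Set.Ioc (0:ℝ) δ, (1-F y)^n := by
    intro n hn
    rw [← aux_geom_int b δ hb0 n, intervalIntegral.integral_of_le hδ0.le]
    apply setIntegral_mono_on
    · exact (Continuous.integrableOn_Ioc (((continuous_const.sub (continuous_const.mul continuous_id)).pow _)))
    · exact (hintn n hn).mono_set Set.Ioc_subset_Ioi_self
    · exact measurableSet_Ioc
    · intro y hy
      have hy' : y ∈ Set.Icc 0 δ := ⟨hy.1.le, hy.2⟩
      have h1 := (hsand y hy').2
      have h2 : 0 ≤ 1 - b*y := by
        have := mul_le_mul_of_nonneg_left hy'.2 hb0.le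
        linarith [hbδ]
      exact pow_le_pow_left₀ h2 (by linarith) n
  have hupmain : ∀ n, m ≤ n → (∫ y in Set.Ioc (0:ℝ) δ, (1-F y)^n)
      ≤ (1 - (1-a*δ)^(n+1)) / (a*((n:ℝ)+1)) := by
    intro n hn
    rw [← aux_geom_int a δ ha0 n, intervalIntegral.integral_of_le hδ0.le]
    apply setIntegral_mono_on
    · exact (hintn n hn).mono_set Set.Ioc_subset_Ioi_self
    · exact (Continuous.integrableOn_Ioc (((continuous_const.sub (continuous_const.mul continuous_id)).pow _)))
    · exact measurableSet_Ioc
    · intro y hy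
      have hy' : y ∈ Set.Icc 0 δ := ⟨hy.1.le, hy.2⟩
      have h1 := (hsand y hy').1
      exact pow_le_pow_left₀ (hG01 y).1 (by linarith) n
  -- constants
  have hf0b : f 0 / b = 1/(1+η) := by
    rw [hb]
    rw [mul_comm, div_mul_eq_div_div, div_self hf0.ne']
  have hf0a : f 0 / a = 1/(1-η) := by
    rw [ha]
    rw [mul_comm, div_mul_eq_div_div, div_self hf0.ne']
  have h1η : (0:ℝ) < 1 + η := by linarith
  have h2η : (0:ℝ) < 1 - η := by linarith
  have hlowconst : (1 - 2*η) ≤ (f 0 / b) * (1-η) := by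
    rw [hf0b, div_mul_eq_mul_div, le_div_iff₀ h1η]
    have hexp : (1 - 2*η)*(1+η) = 1 - η - 2*η^2 := by ring
    have hsq : (0:ℝ) ≤ η^2 := sq_nonneg η
    rw [one_mul]
    linarith
  have hupconst : f 0 / a ≤ 1 + 2*η := by
    rw [hf0a, div_le_iff₀ h2η]
    have hexp : (1 + 2*η)*(1-η) = 1 + η*(1-2*η) := by ring
    have hpos : (0:ℝ) ≤ η*(1-2*η) := mul_nonneg hη0.le (by linarith)
    linarith
  have hf0b0 : 0 ≤ f 0 / b := by positivity
  have hf0a0 : 0 ≤ f 0 / a := by positivity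
  -- eventual facts
  have hev1 : ∀ᶠ n : ℕ in atTop, (1 - b*δ)^(n+1) < η := by
    have h := tendsto_pow_atTop_nhds_zero_of_lt_one hq0b hq1b
    have h2 := h.comp (tendsto_add_atTop_nat 1)
    exact h2.eventually_lt_const hη0
  have hev2 : ∀ᶠ n : ℕ in atTop, f 0 * ((n:ℝ)+1) * r^(n-m) * C < t/4 := by
    have hrn : ‖r‖ < 1 := by rw [Real.norm_eq_abs, abs_of_nonneg hr0]; exact hr1
    have h1 : Tendsto (fun k : ℕ => ((k:ℝ))^1 * r^k) atTop (nhds 0) :=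
      ((summable_norm_pow_mul_geometric_of_norm_lt_one 1 hrn).of_norm).tendsto_atTop_zero
    have h2 : Tendsto (fun k : ℕ => r^k) atTop (nhds 0) :=
      tendsto_pow_atTop_nhds_zero_of_lt_one hr0 hr1
    have h3 : Tendsto (fun k : ℕ => f 0 * C * (((k:ℝ))^1 * r^k)
        + (f 0 * C * ((m:ℝ)+1)) * r^k) atTop (nhds 0) := by
      have := (h1.const_mul (f 0 * C)).add (h2.const_mul (f 0 * C * ((m:ℝ)+1)))
      simpa using this
    have h4 := h3.eventually_lt_const (show (0:ℝ) < t/4 by linarith)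
    have h5 := (tendsto_sub_atTop_nat m).eventually h4
    filter_upwards [h5, eventually_ge_atTop m] with n hn hnm
    have hcast : ((n - m : ℕ):ℝ) = (n:ℝ) - m := Nat.cast_sub hnm
    have heq : f 0 * ((n:ℝ)+1) * r^(n-m) * C
        = f 0 * C * (((n - m : ℕ):ℝ))^1 * r^(n-m) + (f 0 * C * ((m:ℝ)+1)) * r^(n-m) := by
      rw [hcast]; ring
    rw [heq]
    calc f 0 * C * (((n - m : ℕ):ℝ))^1 * r^(n-m) + (f 0 * C * ((m:ℝ)+1)) * r^(n-m)
        = f 0 * C * ((((n - m : ℕ):ℝ))^1 * r^(n-m)) + (f 0 * C * ((m:ℝ)+1)) * r^(n-m) := by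
          ring
    _ < t/4 := hn
  obtain ⟨N, hN⟩ := eventually_atTop.1 (hev1.and (hev2.and (eventually_ge_atTop m)))
  refine ⟨N, fun n hn => ?_⟩
  obtain ⟨e1, e2, hnm⟩ := hN n hn
  have hn1 : (0:ℝ) < (n:ℝ) + 1 := by positivity
  have h3 : (0:ℝ) ≤ f 0 * ((n:ℝ)+1) := by positivity
  -- lower bound
  have hlow : (f 0 / b) * (1 - (1-b*δ)^(n+1)) ≤
      f 0 * ((n:ℝ)+1) * ∫ y in Set.Ioi (0:ℝ), (1-F y)^n := by
    have h2 : (∫ y in Set.Ioc (0:ℝ) δ, (1-F y)^n) ≤ ∫ y in Set.Ioi (0:ℝ), (1-F y)^n :=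
      setIntegral_mono_set (hintn n hnm) (Filter.Eventually.of_forall (fun y => hnn n y))
        (Set.Ioc_subset_Ioi_self.eventuallyLE)
    have h4 := mul_le_mul_of_nonneg_left ((hlowmain n hnm).trans h2) h3
    have h5 : f 0 * ((n:ℝ)+1) * ((1 - (1-b*δ)^(n+1)) / (b*((n:ℝ)+1)))
        = (f 0 / b) * (1 - (1-b*δ)^(n+1)) := aux_arith _ _ _ _ hb0.ne' hn1.ne'
    rw [h5] at h4
    exact h4
  -- upper bound
  have hup : f 0 * ((n:ℝ)+1) * (∫ y in Set.Ioi (0:ℝ), (1-F y)^n)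
      ≤ (f 0 / a) + t/4 := by
    rw [hsplit n hnm, mul_add]
    have h6 := mul_le_mul_of_nonneg_left (hupmain n hnm) h3
    have h7 : f 0 * ((n:ℝ)+1) * ((1 - (1-a*δ)^(n+1)) / (a*((n:ℝ)+1)))
        = (f 0 / a) * (1 - (1-a*δ)^(n+1)) := aux_arith _ _ _ _ ha0.ne' hn1.ne'
    rw [h7] at h6
    have h8 : (f 0 / a) * (1 - (1-a*δ)^(n+1)) ≤ f 0 / a := by
      have hq : 0 ≤ (1-a*δ)^(n+1) := pow_nonneg hq0a _
      have h := mul_le_mul_of_nonneg_left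
        (show 1 - (1-a*δ)^(n+1) ≤ 1 by linarith) hf0a0
      rw [mul_one] at h
      exact h
    have h9 := mul_le_mul_of_nonneg_left (htail n hnm) h3
    have h10 : f 0 * ((n:ℝ)+1) * (r^(n-m) * C) = f 0 * ((n:ℝ)+1) * r^(n-m) * C := by ring
    rw [h10] at h9
    linarith
  -- conclude
  have hlow2 : 1 - t/2 ≤ f 0 * ((n:ℝ)+1) * ∫ y in Set.Ioi (0:ℝ), (1-F y)^n := by
    have hq : (f 0 / b) * (1-η) ≤ (f 0 / b) * (1 - (1-b*δ)^(n+1)) := by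
      apply mul_le_mul_of_nonneg_left _ hf0b0
      linarith [pow_nonneg hq0b (n+1)]
    have : 2*η ≤ t/2 := by linarith
    linarith
  have hup2 : f 0 * ((n:ℝ)+1) * (∫ y in Set.Ioi (0:ℝ), (1-F y)^n) ≤ 1 + 3*t/4 := by
    have : 2*η ≤ t/2 := by linarith
    linarith
  rw [Real.dist_eq, abs_lt]
  constructor <;> [skip; skip] <;> linarith


/-- **Asymptotics of the expected minimum of i.i.d. nonnegative random variables.**
Let `X₁, X₂, …` be i.i.d. random variables supported on `[0, ∞)` with common CDF `F`.
Assume (1) `F` has a density `f` (i.e. `F y = ∫₀^y f`) which is continuous and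
nonvanishing in a neighborhood `[0, ε]` of `0` (in particular `f 0 > 0`), and
(2) `1 - F ∈ L^p([0, ∞))` for some `p > 0`.  Then, as `n → ∞`,
`E[min (X₁, …, Xₙ)] ∼ 1/(f 0 · (n + 1))`, i.e.
`f 0 · (n + 1) · E[min (X₁, …, Xₙ)] → 1`. -/
theorem expectation_min_iid_asymptotic {Ω : Type*} [MeasurableSpace Ω] (P : Measure Ω)
    [IsProbabilityMeasure P] (X : ℕ → Ω → ℝ) (hmeas : ∀ i, Measurable (X i))
    (hindep : iIndepFun X P)
    (hident : ∀ i, IdentDistrib (X i) (X 0) P P)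
    (hpos : ∀ i, ∀ ω, 0 ≤ X i ω) (F : ℝ → ℝ)
    (hF : ∀ i, ∀ y : ℝ, F y = (P {ω | X i ω ≤ y}).toReal)
    (f : ℝ → ℝ) (ε : ℝ) (hε : 0 < ε)
    (hcont : ContinuousOn f (Set.Icc 0 ε))
    (hne : ∀ y ∈ Set.Icc 0 ε, f y ≠ 0) (hf0 : 0 < f 0)
    (hdens : ∀ y ∈ Set.Icc 0 ε, F y = ∫ t in (0 : ℝ)..y, f t)
    (p : ℝ) (hp : 0 < p)
    (hLp : ∫⁻ y in Set.Ioi (0 : ℝ), ENNReal.ofReal ((1 - F y) ^ p) < ⊤) :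
    Tendsto (fun n : ℕ =>
        f 0 * (n + 1) * ∫ ω, (⨅ i : Fin n, X i ω) ∂P) atTop (nhds 1) := by
  -- positivity of f on Icc 0 ε
  have hfpos : ∀ y ∈ Set.Icc 0 ε, 0 < f y := by
    intro y hy
    by_contra h
    push_neg at h
    have hsub : Set.uIcc (0:ℝ) y ⊆ Set.Icc 0 ε := by
      rw [Set.uIcc_of_le hy.1]
      exact Set.Icc_subset_Icc le_rfl hy.2
    have h0 : (0:ℝ) ∈ Set.uIcc (f 0) (f y) := by
      rw [Set.mem_uIcc]; right; exact ⟨h, hf0.le⟩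
    obtain ⟨c, hc, hfc⟩ := intermediate_value_uIcc (hcont.mono hsub) h0
    exact hne c (hsub hc) hfc
  -- basic facts about F
  have hFmono : Monotone F := by
    intro u v huv
    rw [hF 0 u, hF 0 v]
    exact ENNReal.toReal_mono (measure_ne_top _ _)
      (measure_mono (fun ω h => le_trans h huv))
  have hF0 : ∀ y, 0 ≤ F y := fun y => by rw [hF 0 y]; exact ENNReal.toReal_nonneg
  have hF1 : ∀ y, F y ≤ 1 := by
    intro y
    rw [hF 0 y, ← ENNReal.toReal_one]
    exact ENNReal.toReal_mono ENNReal.one_ne_top prob_le_one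
  have hFmeas : Measurable F := hFmono.measurable
  have hG01 : ∀ y, 0 ≤ 1 - F y ∧ 1 - F y ≤ 1 :=
    fun y => ⟨by linarith [hF1 y], by linarith [hF0 y]⟩
  set m : ℕ := max 1 ⌈p⌉₊ with hm
  have hm1 : 1 ≤ m := le_max_left _ _
  have hmp : p ≤ (m:ℝ) := by
    calc p ≤ (⌈p⌉₊ : ℝ) := Nat.le_ceil p
    _ ≤ (m:ℝ) := by exact_mod_cast Nat.cast_le.mpr (le_max_right 1 ⌈p⌉₊)
  -- finiteness of the lintegrals
  have hlintlt : ∀ n, m ≤ n →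
      ∫⁻ y in Set.Ioi (0:ℝ), ENNReal.ofReal ((1 - F y)^n) < ⊤ := by
    intro n hn
    refine lt_of_le_of_lt (lintegral_mono (fun y => ENNReal.ofReal_le_ofReal ?_)) hLp
    rcases eq_or_lt_of_le (hG01 y).1 with h0 | h0
    · rw [← h0, zero_pow (by omega : n ≠ 0)]
      positivity
    · rw [← Real.rpow_natCast (1 - F y) n]
      apply Real.rpow_le_rpow_of_exponent_ge h0 (hG01 y).2
      calc p ≤ (m:ℝ) := hmp
      _ ≤ (n:ℝ) := by exact_mod_cast hn
  have hintOn : ∀ n, m ≤ n →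
      IntegrableOn (fun y => (1 - F y)^n) (Set.Ioi 0) volume := by
    intro n hn
    refine ⟨((measurable_const.sub hFmeas).pow_const n).aestronglyMeasurable, ?_⟩
    rw [hasFiniteIntegral_iff_ofReal
      (Filter.Eventually.of_forall (fun y => pow_nonneg (hG01 y).1 n))]
    exact hlintlt n hn
  -- the key identity: expectation of the min = ∫ (1-F)^n
  have key : ∀ n : ℕ, 1 ≤ n → m ≤ n →
      (∫ ω, (⨅ i : Fin n, X i ω) ∂P) = ∫ y in Set.Ioi (0:ℝ), (1 - F y)^n := by
    intro n hn1 hnm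
    have hnfin : Nonempty (Fin n) := Fin.pos_iff_nonempty.mp hn1
    have hMmeas : Measurable (fun ω => ⨅ i : Fin n, X i ω) :=
      Measurable.iInf (fun i => hmeas i)
    have hMnn : ∀ ω, 0 ≤ ⨅ i : Fin n, X i ω := fun ω => le_ciInf (fun i => hpos i ω)
    have L1 : ∫⁻ ω, ENNReal.ofReal (⨅ i : Fin n, X i ω) ∂P
        = ∫⁻ y in Set.Ioi (0:ℝ), ENNReal.ofReal ((1 - F y)^n) := by
      rw [lintegral_eq_lintegral_meas_lt P (Filter.Eventually.of_forall hMnn)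
        hMmeas.aemeasurable]
      apply setLIntegral_congr_fun measurableSet_Ioi
      exact (fun y _ => aux_prod P X hmeas hindep hident F hF n hn1 y)
    rw [integral_eq_lintegral_of_nonneg_ae (Filter.Eventually.of_forall hMnn)
      hMmeas.aestronglyMeasurable,
      integral_eq_lintegral_of_nonneg_ae
        (Filter.Eventually.of_forall (fun y => pow_nonneg (hG01 y).1 n))
        ((measurable_const.sub hFmeas).pow_const n).aestronglyMeasurable,
      L1]
  -- conclude
  have hmain := aux_tendsto F f ε hε hcont hfpos hdens hFmono hF0 hF1 m hm1
    (hintOn m le_rfl)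
  apply hmain.congr'
  filter_upwards [eventually_ge_atTop m] with n hn
  rw [key n (le_trans hm1 hn) hn]
end

section
/- Let F : [0, ∞) → [0, 1] be a nondecreasing cumulative distribution function that has a density f continuous and nonvanishing in a neighborhood of 0 (so f(0) > 0), and such that 1 − F ∈ L^p([0, ∞)) for some p > 0. Then as n → ∞, ∫₀^∞ (1 − F(y))ⁿ dy ∼ 1/(f(0) · (n+1)); that is, f(0) · (n+1) · ∫₀^∞ (1 − F(y))ⁿ dy → 1. -/
/-!
Near `0`, `F y = f 0 * y + o(y)`, so for `c' < f 0 < c` and small `δ` the integrand is squeezed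
on `(0, δ]` between `(1 - c y)ⁿ` and `(1 - c' y)ⁿ`, whose integrals over `(0, δ]` are
`∼ 1 / (c (n + 1))` and `∼ 1 / (c' (n + 1))`. Beyond `δ` we have `1 - F ≤ 1 - F δ < 1`, so
the tail is at most `(1 - F δ)ⁿ⁻ᵏ ∫ (1 - F)ᵏ`, which is `o(1 / n)`; here `k ≥ p` makes
`(1 - F)ᵏ ≤ (1 - F)ᵖ` integrable. Letting `c, c' → f 0` gives the claim.
-/

open MeasureTheory Filter Set Topology

theorem tendsto_const_div_self {a : ℝ} (ha : a ≠ 0) :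
    Tendsto (fun c => a / c) (𝓝 a) (𝓝 1) := by
  rw [← div_self ha]
  exact (continuousAt_const.div continuousAt_id ha :
    ContinuousAt (fun c => a / c) a).tendsto

theorem integral_one_sub_mul_pow (c d : ℝ) (hc : c ≠ 0) (n : ℕ) :
    ∫ y in (0 : ℝ)..d, (1 - c * y) ^ n = (1 - (1 - c * d) ^ (n + 1)) / (c * (n + 1)) := by
  have h := intervalIntegral.integral_comp_mul_add (fun x : ℝ => x ^ n) (neg_ne_zero.mpr hc) 1
    (a := 0) (b := d)
  simp only [mul_zero, zero_add, integral_pow, one_pow, smul_eq_mul] at h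
  rw [show (fun y => (1 - c * y) ^ n) = fun y => (-c * y + 1) ^ n by ext; ring_nf, h]
  field_simp
  ring

theorem tendsto_mul_setIntegral_one_sub_mul_pow {c d : ℝ} (hc : 0 < c) (hd : 0 < d)
    (hcd : c * d ≤ 1) :
    Tendsto (fun n : ℕ => (n + 1) * ∫ y in Ioc 0 d, (1 - c * y) ^ n) atTop (𝓝 c⁻¹) := by
  have hr : Tendsto (fun n : ℕ => (1 - c * d) ^ (n + 1)) atTop (𝓝 0) :=
    (tendsto_pow_atTop_nhds_zero_of_lt_one (by linarith) (by nlinarith)).comp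
      (tendsto_add_atTop_nat 1)
  have hlim := ((tendsto_const_nhds (x := (1 : ℝ))).sub hr).div_const c
  rw [sub_zero, one_div] at hlim
  refine hlim.congr fun n => ?_
  rw [← intervalIntegral.integral_of_le hd.le, integral_one_sub_mul_pow c d hc.ne']
  field_simp

theorem tendsto_mul_integral_pow_of_le_of_lt_one {α : Type*} [MeasurableSpace α]
    {μ : Measure α} {g : α → ℝ} {q : ℝ} {k : ℕ} (hg0 : ∀ᵐ x ∂μ, 0 ≤ g x)
    (hgq : ∀ᵐ x ∂μ, g x ≤ q) (hq0 : 0 ≤ q) (hq1 : q < 1)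
    (hk : Integrable (fun x => g x ^ k) μ) :
    Tendsto (fun n : ℕ => (n + 1) * ∫ x, g x ^ n ∂μ) atTop (𝓝 0) := by
  rw [← tendsto_add_atTop_iff_nat k]
  set C := ∫ x, g x ^ k ∂μ
  have hbound : ∀ n : ℕ, ∫ x, g x ^ (n + k) ∂μ ≤ q ^ n * C := fun n => by
    rw [← integral_const_mul]
    refine integral_mono_of_nonneg (hg0.mono fun x hx => pow_nonneg hx _) (hk.const_mul _) ?_
    filter_upwards [hg0, hgq] with x hx hxq
    rw [pow_add]
    exact mul_le_mul_of_nonneg_right (pow_le_pow_left₀ hx hxq n) (pow_nonneg hx k)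
  have hupper :
      Tendsto (fun n : ℕ => ((n : ℝ) * q ^ n + (k + 1) * q ^ n) * C) atTop (𝓝 0) := by
    simpa using ((tendsto_self_mul_const_pow_of_lt_one hq0 hq1).add
      ((tendsto_pow_atTop_nhds_zero_of_lt_one hq0 hq1).const_mul ((k : ℝ) + 1))).mul_const C
  refine tendsto_of_tendsto_of_tendsto_of_le_of_le tendsto_const_nhds hupper (fun n => ?_)
    (fun n => ?_)
  · exact mul_nonneg (by positivity) (integral_nonneg_of_ae (hg0.mono fun x hx => pow_nonneg hx _))
  · calc ((n + k : ℕ) + 1 : ℝ) * ∫ x, g x ^ (n + k) ∂μ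
          ≤ ((n + k : ℕ) + 1 : ℝ) * (q ^ n * C) := by gcongr; exact hbound n
      _ = ((n : ℝ) * q ^ n + (k + 1) * q ^ n) * C := by push_cast; ring

theorem integrable_pow_of_lintegral_rpow_lt_top {α : Type*} [MeasurableSpace α]
    {μ : Measure α} {g : α → ℝ} {p : ℝ} {n : ℕ} (hg : AEStronglyMeasurable g μ)
    (hg0 : ∀ᵐ x ∂μ, 0 ≤ g x) (hg1 : ∀ᵐ x ∂μ, g x ≤ 1) (hp : 0 < p) (hpn : p ≤ n)
    (hLp : ∫⁻ x, ENNReal.ofReal (g x ^ p) ∂μ < ⊤) : Integrable (fun x => g x ^ n) μ := by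
  have hle : ∀ᵐ x ∂μ, g x ^ n ≤ g x ^ p := by
    filter_upwards [hg0, hg1] with x hx hx1
    rcases hx.eq_or_lt with hx0 | hx0
    · rw [← hx0, zero_pow (by exact_mod_cast (hp.trans_le hpn).ne'), Real.zero_rpow hp.ne']
    · rw [← Real.rpow_natCast]
      exact Real.rpow_le_rpow_of_exponent_ge hx0 hx1 hpn
  refine ⟨hg.pow n, (hasFiniteIntegral_iff_ofReal (hg0.mono fun x hx => pow_nonneg hx n)).2 ?_⟩
  exact (lintegral_mono_ae (hle.mono fun x hx => ENNReal.ofReal_le_ofReal hx)).trans_lt hLp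

theorem tendsto_div_nhdsGT_of_eq_integral {F f : ℝ → ℝ} {ε : ℝ} (hε : 0 < ε)
    (hf : ContinuousOn f (Icc 0 ε)) (hF : ∀ y ∈ Icc 0 ε, F y = ∫ t in (0 : ℝ)..y, f t) :
    Tendsto (fun y => F y / y) (𝓝[>] 0) (𝓝 (f 0)) := by
  have hIcc : Icc 0 ε ∈ 𝓝[>] (0 : ℝ) := Icc_mem_nhdsGT hε
  have hderiv : HasDerivWithinAt (fun u => ∫ t in (0 : ℝ)..u, f t) (f 0) (Ici 0) 0 :=
    intervalIntegral.integral_hasDerivWithinAt_right IntervalIntegrable.refl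
      ((hf.stronglyMeasurableAtFilter_nhdsWithin measurableSet_Icc 0).filter_mono
        (nhdsWithin_le_of_mem hIcc))
      ((hf 0 ⟨le_rfl, hε.le⟩).mono_of_mem_nhdsWithin hIcc)
  replace hderiv := hderiv.mono Ioi_subset_Ici_self
  rw [hasDerivWithinAt_iff_tendsto_slope' self_notMem_Ioi] at hderiv
  refine hderiv.congr' ?_
  filter_upwards [Ioc_mem_nhdsGT hε] with y hy
  rw [slope_def_field, hF y ⟨hy.1.le, hy.2⟩]
  simp

theorem eventually_lt_mul_integral_one_sub_pow {F : ℝ → ℝ} {a b : ℝ} (ha : 0 < a)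
    (hF : Tendsto (fun y => F y / y) (𝓝[>] 0) (𝓝 a)) (hF1 : ∀ y, 0 < y → F y ≤ 1)
    (hint : ∀ᶠ n : ℕ in atTop, IntegrableOn (fun y => (1 - F y) ^ n) (Ioi 0)) (hb : b < 1) :
    ∀ᶠ n : ℕ in atTop, b < a * (n + 1) * ∫ y in Ioi 0, (1 - F y) ^ n := by
  have hdiv := (tendsto_const_div_self ha.ne').mono_left (nhdsWithin_le_nhds (s := Ioi a))
  obtain ⟨c, hbc, hac⟩ := ((hdiv.eventually (lt_mem_nhds hb)).and self_mem_nhdsWithin).exists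
  have hc : 0 < c := ha.trans hac
  obtain ⟨δ, hδ, hδF⟩ := mem_nhdsGT_iff_exists_Ioc_subset.1
    ((hF.eventually (gt_mem_nhds hac)).and (Ioc_mem_nhdsGT (one_div_pos.2 hc)))
  have hFc : ∀ y ∈ Ioc 0 δ, F y ≤ c * y := fun y hy =>
    ((div_lt_iff₀ hy.1).1 (hδF hy).1).le
  have hcδ : c * δ ≤ 1 := (le_div_iff₀' hc).1 (hδF ⟨hδ, le_rfl⟩).2.2
  have hlim := (tendsto_mul_setIntegral_one_sub_mul_pow hc hδ hcδ).const_mul a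
  rw [← div_eq_mul_inv] at hlim
  filter_upwards [hlim.eventually (lt_mem_nhds hbc), hint] with n hn hn_int
  refine hn.trans_le ?_
  rw [mul_assoc]
  gcongr
  calc ∫ y in Ioc 0 δ, (1 - c * y) ^ n ≤ ∫ y in Ioc 0 δ, (1 - F y) ^ n := by
        refine setIntegral_mono_on ((by fun_prop : Continuous _).integrableOn_Ioc)
          (hn_int.mono_set Ioc_subset_Ioi_self) measurableSet_Ioc fun y hy => ?_
        exact pow_le_pow_left₀ (by nlinarith [hy.2]) (by linarith [hFc y hy]) n
    _ ≤ ∫ y in Ioi 0, (1 - F y) ^ n :=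
        setIntegral_mono_set hn_int (ae_restrict_of_forall_mem measurableSet_Ioi fun y hy =>
          pow_nonneg (by linarith [hF1 y hy]) n) Ioc_subset_Ioi_self.eventuallyLE

theorem eventually_mul_integral_one_sub_pow_lt {F : ℝ → ℝ} {a b : ℝ} (ha : 0 < a)
    (hF : Tendsto (fun y => F y / y) (𝓝[>] 0) (𝓝 a)) (hF1 : ∀ y, 0 < y → F y ≤ 1)
    (hmono : MonotoneOn F (Ioi 0))
    (hint : ∀ᶠ n : ℕ in atTop, IntegrableOn (fun y => (1 - F y) ^ n) (Ioi 0)) (hb : 1 < b) :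
    ∀ᶠ n : ℕ in atTop, a * (n + 1) * ∫ y in Ioi 0, (1 - F y) ^ n < b := by
  have hdiv := (tendsto_const_div_self ha.ne').mono_left (nhdsWithin_le_nhds (s := Iio a))
  obtain ⟨c, hcb, hc, hca⟩ :=
    ((hdiv.eventually (gt_mem_nhds hb)).and (Ioo_mem_nhdsLT ha)).exists
  obtain ⟨δ, hδ, hδF⟩ := mem_nhdsGT_iff_exists_Ioc_subset.1 (hF.eventually (lt_mem_nhds hca))
  have hFc : ∀ y ∈ Ioc 0 δ, c * y ≤ F y := fun y hy => ((lt_div_iff₀ hy.1).1 (hδF hy)).le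
  have hcδ : c * δ ≤ 1 := (hFc δ ⟨hδ, le_rfl⟩).trans (hF1 δ hδ)
  obtain ⟨k, hk⟩ := hint.exists
  have htail :
      Tendsto (fun n : ℕ => (n + 1) * ∫ y in Ioi δ, (1 - F y) ^ n) atTop (𝓝 0) := by
    refine tendsto_mul_integral_pow_of_le_of_lt_one (q := 1 - F δ)
      (ae_restrict_of_forall_mem measurableSet_Ioi fun y hy => ?_)
      (ae_restrict_of_forall_mem measurableSet_Ioi fun y hy => ?_)
      (by linarith [hF1 δ hδ]) (by linarith [mul_pos hc hδ, hFc δ ⟨hδ, le_rfl⟩])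
      (hk.mono_set (Ioi_subset_Ioi hδ.le))
    · linarith [hF1 y (hδ.trans hy)]
    · linarith [hmono hδ (mem_Ioi.2 (hδ.trans hy)) hy.le]
  have hlim := ((tendsto_mul_setIntegral_one_sub_mul_pow hc hδ hcδ).add htail).const_mul a
  rw [add_zero, ← div_eq_mul_inv] at hlim
  filter_upwards [hlim.eventually (gt_mem_nhds hcb), hint] with n hn hn_int
  refine lt_of_le_of_lt ?_ hn
  rw [mul_assoc]
  gcongr
  rw [← Ioc_union_Ioi_eq_Ioi hδ.le, setIntegral_union (Ioc_disjoint_Ioi le_rfl) measurableSet_Ioi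
    (hn_int.mono_set Ioc_subset_Ioi_self) (hn_int.mono_set (Ioi_subset_Ioi hδ.le)), mul_add]
  gcongr _ * ?_ + _
  refine setIntegral_mono_on (hn_int.mono_set Ioc_subset_Ioi_self)
    ((by fun_prop : Continuous fun y : ℝ => (1 - c * y) ^ n).integrableOn_Ioc) measurableSet_Ioc
    fun y hy => ?_
  exact pow_le_pow_left₀ (by linarith [hF1 y hy.1]) (by linarith [hFc y hy]) n

theorem integral_one_sub_cdf_pow_asymptotic_general (F : ℝ → ℝ)
    (hrange : ∀ y : ℝ, 0 ≤ y → 0 ≤ F y ∧ F y ≤ 1)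
    (hmono : ∀ y z : ℝ, 0 ≤ y → y ≤ z → F y ≤ F z)
    (f : ℝ → ℝ) (ε : ℝ) (hε : 0 < ε)
    (hcont : ContinuousOn f (Set.Icc 0 ε))
    (hf0 : 0 < f 0)
    (hdens : ∀ y ∈ Set.Icc 0 ε, F y = ∫ t in (0 : ℝ)..y, f t)
    (p : ℝ) (hp : 0 < p)
    (hLp : ∫⁻ y in Set.Ioi (0 : ℝ), ENNReal.ofReal ((1 - F y) ^ p) < ⊤) :
    Tendsto (fun n : ℕ =>
        f 0 * (n + 1) * ∫ y in Set.Ioi (0 : ℝ), (1 - F y) ^ n) atTop (nhds 1) := by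
  have hF := tendsto_div_nhdsGT_of_eq_integral hε hcont hdens
  have hF1 : ∀ y, 0 < y → F y ≤ 1 := fun y hy => (hrange y hy.le).2
  have hmonoOn : MonotoneOn F (Ioi 0) := fun y hy z _ hyz => hmono y z (le_of_lt hy) hyz
  have hint : ∀ᶠ n : ℕ in atTop, IntegrableOn (fun y => (1 - F y) ^ n) (Ioi 0) := by
    filter_upwards [eventually_ge_atTop ⌈p⌉₊] with n hn
    refine integrable_pow_of_lintegral_rpow_lt_top ?_
      (ae_restrict_of_forall_mem measurableSet_Ioi fun y hy => by linarith [hF1 y hy])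
      (ae_restrict_of_forall_mem measurableSet_Ioi fun y hy => by linarith [(hrange y hy.le).1])
      hp ((Nat.le_ceil p).trans (by exact_mod_cast hn)) hLp
    exact (aemeasurable_const.sub
      (aemeasurable_restrict_of_monotoneOn measurableSet_Ioi hmonoOn)).aestronglyMeasurable
  exact tendsto_order.2 ⟨fun b hb => eventually_lt_mul_integral_one_sub_pow hf0 hF hF1 hint hb,
    fun b hb => eventually_mul_integral_one_sub_pow_lt hf0 hF hF1 hmonoOn hint hb⟩

/-- **Asymptotics of `∫₀^∞ (1 - F y)ⁿ dy` for a general CDF.**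
Let `F : [0,∞) → [0,1]` be nondecreasing, with a density `f` (`F y = ∫₀^y f`)
continuous and nonvanishing on a neighborhood `[0, ε]` of `0` (so `f 0 > 0`), and with
`1 - F ∈ L^p([0,∞))` for some `p > 0`.  Then, as `n → ∞`,
`∫₀^∞ (1 - F y)ⁿ dy ∼ 1/(f 0 · (n+1))`, i.e.
`f 0 · (n + 1) · ∫₀^∞ (1 - F y)ⁿ dy → 1`. -/
theorem integral_one_sub_cdf_pow_asymptotic (F : ℝ → ℝ)
    (hrange : ∀ y : ℝ, 0 ≤ y → 0 ≤ F y ∧ F y ≤ 1)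
    (hmono : ∀ y z : ℝ, 0 ≤ y → y ≤ z → F y ≤ F z)
    (f : ℝ → ℝ) (ε : ℝ) (hε : 0 < ε)
    (hcont : ContinuousOn f (Set.Icc 0 ε))
    (hne : ∀ y ∈ Set.Icc 0 ε, f y ≠ 0) (hf0 : 0 < f 0)
    (hdens : ∀ y ∈ Set.Icc 0 ε, F y = ∫ t in (0 : ℝ)..y, f t)
    (p : ℝ) (hp : 0 < p)
    (hLp : ∫⁻ y in Set.Ioi (0 : ℝ), ENNReal.ofReal ((1 - F y) ^ p) < ⊤) :
    Tendsto (fun n : ℕ =>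
        f 0 * (n + 1) * ∫ y in Set.Ioi (0 : ℝ), (1 - F y) ^ n) atTop (nhds 1) :=
  integral_one_sub_cdf_pow_asymptotic_general F hrange hmono f ε hε hcont hf0 hdens p hp hLp
end
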